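/- arXiv:2010.06401 — 2 statements merged into one kernel-verified Lean document; each statement's English description precedes it below -/
import Mathlib

section
/- Assume m, n ≥ 7. Then for every σ ∈ S_3, the matrix P^[2]_σ lies in the ℝ-linear span of the set {P^[2]_τ : τ ∈ S_0 ∪ S_1 ∪ S_2}. -/
open Finset

/-- The matrix `P^[2]_σ`: entry at `((i,j),(k,l))` is `P_σ(i,j) · P_σ(k,l)`, where
`P_σ` is the permutation matrix of `σ`. -/
noncomputable def permMat2 {n : ℕ} (σ : Equiv.Perm (Fin n)) :
    (Fin n × Fin n) → (Fin n × Fin n) → ℝ :=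
  fun p q => (if σ p.1 = p.2 then (1 : ℝ) else 0) * (if σ q.1 = q.2 then (1 : ℝ) else 0)


/-- `Sk i j k`: the set of permutations `σ` such that `σ (i r) = j r` holds for exactly `k`
indices `r`. -/
def Sk {n m : ℕ} (i j : Fin m → Fin n) (k : ℕ) : Set (Equiv.Perm (Fin n)) :=
  {σ | (Finset.univ.filter (fun r : Fin m => σ (i r) = j r)).card = k}

/-! Let `A` be the three indices matched by `σ`, `q` a point outside `i '' A`, and
`s = i '' A ∪ {q}`. The alternating sum of `P^[2]_{σ ∘ π}` over the permutations `π` of `s`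
vanishes: an entry of `P^[2]_τ` reads `τ` at two points only, and transposing two other points
of `s` flips the sign. A permutation `π ≠ 1` of `s` destroys a match of `σ` without creating a
new one, so solving the sum for the term `π = 1` writes `P^[2]_σ` through `S_0 ∪ S_1 ∪ S_2`. -/

open Equiv Equiv.Perm

theorem Equiv.Perm.sum_sign_smul_eq_zero_of_mul_swap {β M : Type*} [Fintype β] [DecidableEq β]
    [AddCommGroup M] (f : Perm β → M) {u v : β} (huv : u ≠ v)
    (hf : ∀ π, f (π * swap u v) = f π) : ∑ π, sign π • f π = 0 := by
  refine sum_ninvolution (fun π => π * swap u v) (fun π => ?_) (fun π _ => ?_)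
    (fun _ => mem_univ _) (fun π => by simp [mul_assoc])
  · rw [hf, sign_mul, sign_swap huv, mul_neg_one, Units.neg_smul, add_neg_cancel]
  · simpa [swap_eq_one_iff] using huv

theorem permMat2_apply_congr {n : ℕ} {σ τ : Perm (Fin n)} {p q : Fin n × Fin n}
    (hp : σ p.1 = τ p.1) (hq : σ q.1 = τ q.1) : permMat2 σ p q = permMat2 τ p q := by
  simp only [permMat2, hp, hq]

theorem sum_sign_smul_permMat2_mul_ofSubtype {n : ℕ} (σ : Perm (Fin n)) {s : Finset (Fin n)}
    (hs : 4 ≤ #s) : ∑ π : Perm s, sign π • permMat2 (σ * ofSubtype π) = 0 := by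
  funext p q
  obtain ⟨u, hu, v, hv, huv⟩ := one_lt_card.1 <| show 1 < #(s \ {p.1, q.1}) by
    have := le_card_sdiff {p.1, q.1} s
    have := card_le_two (a := p.1) (b := q.1)
    omega
  simp only [mem_sdiff, mem_insert, mem_singleton, not_or] at hu hv
  simp only [Finset.sum_apply, Pi.smul_apply, Pi.zero_apply]
  refine sum_sign_smul_eq_zero_of_mul_swap _ (u := ⟨u, hu.1⟩) (v := ⟨v, hv.1⟩)
    (by simpa using huv) fun π => permMat2_apply_congr ?_ ?_
  all_goals simp [ofSubtype_swap_eq, swap_apply_of_ne_of_ne, hu.2, hv.2, eq_comm]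

def matchSet {n m : ℕ} (i j : Fin m → Fin n) (σ : Perm (Fin n)) : Finset (Fin m) :=
  univ.filter fun r => σ (i r) = j r

section matchSet

variable {n m : ℕ} {i j : Fin m → Fin n} {σ : Perm (Fin n)} {s : Finset (Fin n)} {q : Fin n}

theorem mem_matchSet {r : Fin m} : r ∈ matchSet i j σ ↔ σ (i r) = j r := by
  simp [matchSet]

theorem mem_Sk_iff {k : ℕ} : σ ∈ Sk i j k ↔ #(matchSet i j σ) = k :=
  Iff.rfl

theorem matchSet_mul_ofSubtype_subset (hi : Function.Injective i) (hj : Function.Injective j)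
    (hs : s ⊆ insert q ((matchSet i j σ).image i)) (π : Perm s) :
    matchSet i j (σ * ofSubtype π) ⊆ matchSet i j σ := by
  intro r hr
  rw [mem_matchSet, mul_apply] at hr
  by_cases hrs : i r ∈ s
  swap
  · rwa [ofSubtype_apply_of_not_mem π hrs, ← mem_matchSet] at hr
  have mem_of_image : ∀ x ∈ (matchSet i j σ).image i, σ x = j r → r ∈ matchSet i j σ := by
    simp only [mem_image]
    rintro _ ⟨r', hr', rfl⟩ hx
    rwa [hj (hx.symm.trans (mem_matchSet.1 hr'))]
  rcases eq_or_ne (i r) q with hrq | hrq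
  · have hπr : ofSubtype π (i r) ∈ s := (ofSubtype_apply_mem_iff_mem π _).2 hrs
    rcases mem_insert.1 (hs hπr) with hπq | hπim
    · rwa [hπq, ← hrq, ← mem_matchSet] at hr
    · exact mem_of_image _ hπim hr
  · obtain ⟨r', hr', hir⟩ := mem_image.1 ((mem_insert.1 (hs hrs)).resolve_left hrq)
    rwa [← hi hir]

theorem matchSet_mul_ofSubtype_ne (hs : s ⊆ insert q ((matchSet i j σ).image i)) {π : Perm s}
    (hπ : π ≠ 1) : matchSet i j (σ * ofSubtype π) ≠ matchSet i j σ := by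
  intro heq
  have hfix : ∀ x ∈ (matchSet i j σ).image i, ofSubtype π x = x := by
    simp only [mem_image, forall_exists_index, and_imp]
    rintro x r hr rfl
    have hrπ : σ (ofSubtype π (i r)) = j r := mem_matchSet.1 (heq.symm ▸ hr)
    exact σ.injective (hrπ.trans (mem_matchSet.1 hr).symm)
  refine hπ (ofSubtype_injective ((card_support_le_one.1 ?_).trans (map_one _).symm))
  refine (card_le_card (s := (ofSubtype π).support) (t := {q}) fun x hx => ?_).trans_eq
    (card_singleton q)
  rw [mem_support] at hx
  by_contra hxq
  by_cases hxs : x ∈ s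
  · exact hx (hfix x ((mem_insert.1 (hs hxs)).resolve_left (mem_singleton.not.1 hxq)))
  · exact hx (ofSubtype_apply_of_not_mem π hxs)

end matchSet

theorem mem_span_image_ne_of_sum_smul_eq_zero {ι R M : Type*} [Fintype ι] [DecidableEq ι]
    [Ring R] [AddCommGroup M] [Module R M] {c : ι → Rˣ} {f : ι → M}
    (h : ∑ k, c k • f k = 0) (k₀ : ι) : f k₀ ∈ Submodule.span R (f '' {k | k ≠ k₀}) := by
  rw [← add_sum_erase _ _ (mem_univ k₀)] at h
  rw [← Submodule.smul_mem_iff' _ (c k₀), eq_neg_of_add_eq_zero_left h]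
  refine neg_mem (Submodule.sum_mem _ fun k hk => ?_)
  rw [Submodule.smul_mem_iff']
  exact Submodule.subset_span ⟨k, ne_of_mem_erase hk, rfl⟩

theorem stmt4_general {n m : ℕ} (hn : 7 ≤ n)
    (i j : Fin m → Fin n) (hi : Function.Injective i) (hj : Function.Injective j)
    (σ : Equiv.Perm (Fin n)) (hσ : σ ∈ Sk i j 3) :
    permMat2 σ ∈ Submodule.span ℝ
      (permMat2 '' (Sk i j 0 ∪ Sk i j 1 ∪ Sk i j 2)) := by
  rw [mem_Sk_iff] at hσ
  obtain ⟨q, -, hq⟩ := exists_mem_notMem_of_card_lt_card (s := (matchSet i j σ).image i)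
    (t := univ) (by rw [card_image_of_injective _ hi, hσ, card_univ, Fintype.card_fin]; omega)
  set s := insert q ((matchSet i j σ).image i)
  have hs : 4 ≤ #s := by simp [s, card_insert_of_notMem hq, card_image_of_injective _ hi, hσ]
  have hspan := mem_span_image_ne_of_sum_smul_eq_zero
    (sum_sign_smul_permMat2_mul_ofSubtype σ hs) 1
  rw [map_one, mul_one] at hspan
  refine Submodule.span_le_restrictScalars ℤ ℝ _ (Submodule.span_mono ?_ hspan)
  rintro _ ⟨π, hπ, rfl⟩
  refine ⟨_, ?_, rfl⟩
  have hlt := card_lt_card <| (matchSet_mul_ofSubtype_subset hi hj subset_rfl π).ssubset_of_ne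
    (matchSet_mul_ofSubtype_ne subset_rfl hπ)
  simp only [Set.mem_union, mem_Sk_iff]
  omega

theorem stmt4 {n m : ℕ} (hmn : m ≤ n) (hm : 7 ≤ m) (hn : 7 ≤ n)
    (i j : Fin m → Fin n) (hi : Function.Injective i) (hj : Function.Injective j)
    (σ : Equiv.Perm (Fin n)) (hσ : σ ∈ Sk i j 3) :
    permMat2 σ ∈ Submodule.span ℝ
      (permMat2 '' (Sk i j 0 ∪ Sk i j 1 ∪ Sk i j 2)) :=
  stmt4_general hn i j hi hj σ hσ
end

section
/- Let m ≥ 1, let i_1,…,i_m, k ∈ [n] be pairwise distinct and let j_1,…,j_m, l ∈ [n] be pairwise distinct. Let σ be a permutation of [n], let q = #{r ∈ [m] : σ(i_r) = j_r}, and let ε = 1 if σ(k) = l and ε = 0 otherwise. Then, as real numbers, P^[2]_σ((k,l),(k,l)) + ∑_{1≤r<s≤m} P^[2]_σ((i_r,j_r),(i_s,j_s)) − ∑_{r=1}^m P^[2]_σ((i_r,j_r),(k,l)) = (q − ε)(q − ε − 1)/2. In other words, the slack of the QAP1 inequality ∑_{r=1}^m Y((i_r,j_r),(k,l)) − Y((k,l),(k,l))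 − ∑_{r<s} Y((i_r,j_r),(i_s,j_s)) ≤ 0 at the vertex P^[2]_σ equals the binomial coefficient binom(q − ε, 2). -/
/-! Each entry of `P^[2]_σ` is a product of two 0/1 indicators. Hence the sum over pairs
`r < s` is `binom(q, 2)`, the cross sum is `q ε` and the diagonal entry is `ε`; since `ε² = ε`,
`ε + binom(q, 2) - q ε = binom(q - ε, 2)`. -/

open Finset

theorem sq_sum_eq_two_mul_sum_lt_add_sum_sq {ι R : Type*} [LinearOrder ι] [Fintype ι]
    [CommSemiring R] (f : ι → R) :
    (∑ r, f r) ^ 2 = 2 * (∑ r, ∑ s, if r < s then f r * f s else 0) + ∑ r, f r ^ 2 := by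
  have hsplit : ∀ r s : ι, f r * f s = (if r < s then f r * f s else 0)
      + (if s < r then f s * f r else 0) + (if r = s then f r ^ 2 else 0) := by
    intro r s
    rcases lt_trichotomy r s with h | rfl | h
    · simp [h, h.not_gt, h.ne]
    · simp [sq]
    · simp [h, h.not_gt, h.ne', mul_comm]
  rw [sq, sum_mul_sum, sum_congr rfl fun r _ => sum_congr rfl fun s _ => hsplit r s]
  simp only [sum_add_distrib, sum_ite_eq, mem_univ, if_true]
  rw [sum_comm (f := fun r s => if s < r then f s * f r else 0)]
  ring

theorem two_mul_sum_lt_boole_mul_boole {ι R : Type*} [LinearOrder ι] [Fintype ι] [CommRing R]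
    (p : ι → Prop) [DecidablePred p] :
    2 * (∑ r, ∑ s, if r < s then (if p r then (1 : R) else 0) * (if p s then 1 else 0) else 0)
      = (#{r | p r} : R) ^ 2 - #{r | p r} := by
  have hboole : ∑ r, (if p r then (1 : R) else 0) = #{r | p r} := by
    rw [sum_boole]
  rw [← hboole, sq_sum_eq_two_mul_sum_lt_add_sum_sq]
  simp only [ite_pow, one_pow, zero_pow two_ne_zero]
  ring

theorem stmt10_general {n m : ℕ}
    (i j : Fin m → Fin n) (k l : Fin n)
    (σ : Equiv.Perm (Fin n))
    (q : ℕ) (hq : q = (Finset.univ.filter (fun r : Fin m => σ (i r) = j r)).card)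
    (ε : ℝ) (hε : ε = if σ k = l then 1 else 0) :
    permMat2 σ (k, l) (k, l)
      + (∑ r : Fin m, ∑ s : Fin m, if r < s then permMat2 σ (i r, j r) (i s, j s) else 0)
      - (∑ r : Fin m, permMat2 σ (i r, j r) (k, l))
    = ((q : ℝ) - ε) * ((q : ℝ) - ε - 1) / 2 := by
  have hpairs := two_mul_sum_lt_boole_mul_boole (R := ℝ) fun r => σ (i r) = j r
  have hcross : ∑ r, permMat2 σ (i r, j r) (k, l) = q * ε := by
    simp only [permMat2, ← hε, ← sum_mul, sum_boole, hq]
  have hε_idem : ε * ε = ε := by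
    split_ifs at hε <;> simp [hε]
  have hkl : permMat2 σ (k, l) (k, l) = ε := by
    simp only [permMat2, ← hε, hε_idem]
  rw [hkl, hcross, hq]
  simp only [permMat2]
  linear_combination hpairs / 2 - hε_idem / 2

theorem stmt10 {n m : ℕ} (hm : 1 ≤ m)
    (i j : Fin m → Fin n) (k l : Fin n)
    (hi : Function.Injective i) (hik : ∀ r : Fin m, i r ≠ k)
    (hj : Function.Injective j) (hjl : ∀ r : Fin m, j r ≠ l)
    (σ : Equiv.Perm (Fin n))
    (q : ℕ) (hq : q = (Finset.univ.filter (fun r : Fin m => σ (i r) = j r)).card)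
    (ε : ℝ) (hε : ε = if σ k = l then 1 else 0) :
    permMat2 σ (k, l) (k, l)
      + (∑ r : Fin m, ∑ s : Fin m, if r < s then permMat2 σ (i r, j r) (i s, j s) else 0)
      - (∑ r : Fin m, permMat2 σ (i r, j r) (k, l))
    = ((q : ℝ) - ε) * ((q : ℝ) - ε - 1) / 2 :=
  stmt10_general i j k l σ q hq ε hε
end
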